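/- arXiv:2407.11816 — 6 statements merged into one kernel-verified Lean document; each statement's English description precedes it below -/
import Mathlib

section
/- Composition of modality actions is well-defined: for any modalities μ and ν and any effect context E, applying the composite modality μ∘ν to E equals applying ν to the result of applying μ to E, i.e., (μ∘ν)(E) = ν(μ(E)). -/
namespace MET

/-! Mode theory of Modal Effect Types (Tang et al.).
Effect contexts are scoped rows: for each label, an infinite sequence of
presence types with (intended) cofinitely many absent entries. -/

/-- Operation signatures (abstract). -/
abbrev Sig := ℕ
/-- Effect labels. -/
abbrev Label := ℕ
/-- Presence types: `none` is absent `−`, `some s` an operation arrow `A ↠ B`. -/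
abbrev Presence := Option Sig
/-- Effect contexts: for each label, the sequence of presence types of its occurrences. -/
abbrev Ctx := Label → ℕ → Presence
/-- Masks: a multiset of labels, as a count per label. -/
abbrev Mask := Label → ℕ
/-- Extensions: a finite row of presence types per label. -/
abbrev Ext := Label → List Presence

/-- Prepend an extension to an effect context: `D + E`. -/
def addExt (D : Ext) (E : Ctx) : Ctx := fun ℓ n =>
  if h : n < (D ℓ).length then (D ℓ)[n]'h else E ℓ (n - (D ℓ).length)

/-- Remove masked labels from the left: `E − L`. -/
def subMask (E : Ctx) (L : Mask) : Ctx := fun ℓ n => E ℓ (n + L ℓ)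

/-- Modalities: absolute `[E]` or relative `⟨L|D⟩`. -/
inductive Mod where
  | abs (E : Ctx)
  | rel (L : Mask) (D : Ext)

/-- Action of a modality on an effect context: `[E](F) = E`, `⟨L|D⟩(F) = D + (F − L)`. -/
def act : Mod → Ctx → Ctx
  | .abs E, _ => E
  | .rel L D, F => addExt D (subMask F L)

/-- `L ⋈ D`: leftover mask after cancelling against the extension. -/
def bowtieL (L : Mask) (D : Ext) : Mask := fun ℓ => L ℓ - (D ℓ).length
/-- `L ⋈ D`: leftover extension after cancelling against the mask. -/
def bowtieD (L : Mask) (D : Ext) : Ext := fun ℓ => (D ℓ).drop (L ℓ)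

/-- Modality composition `μ ∘ ν`:
`μ∘[E] = [E]`, `[E]∘⟨L|D⟩ = [D+(E−L)]`,
`⟨L₁|D₁⟩∘⟨L₂|D₂⟩ = ⟨L₁+L | D₂+D⟩` where `(L,D) = L₂ ⋈ D₁`. -/
def Mod.comp : Mod → Mod → Mod
  | _, .abs E => .abs E
  | .abs E, .rel L D => .abs (addExt D (subMask E L))
  | .rel L₁ D₁, .rel L₂ D₂ =>
      .rel (fun ℓ => L₁ ℓ + bowtieL L₂ D₁ ℓ) (fun ℓ => D₂ ℓ ++ bowtieD L₂ D₁ ℓ)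

/-- The identity relative modality `⟨⟩ = ⟨·|·⟩`. -/
def idMod : Mod := .rel (fun _ => 0) (fun _ => [])

/-- Subtyping of presence types: absent can be upcast to any operation arrow. -/
def ple : Presence → Presence → Prop
  | none, _ => True
  | some s, some s' => s = s'
  | some _, none => False

/-- Subeffecting `E ≤ F`. -/
def cle (E F : Ctx) : Prop := ∀ ℓ n, ple (E ℓ n) (F ℓ n)

/-- The empty effect context `·`. -/
def emptyCtx : Ctx := fun _ _ => none

/-- Subtyping of extensions: same labels, pointwise upcast of presence types. -/
def extLE (D D' : Ext) : Prop := ∀ ℓ, List.Forall₂ ple (D ℓ) (D' ℓ)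

/-- Add one occurrence of `ℓ` to a mask: `ℓ, L`. -/
def addMask (ℓ : Label) (L : Mask) : Mask := fun ℓ' => if ℓ' = ℓ then L ℓ' + 1 else L ℓ'
/-- Append one entry `ℓ : P` to an extension: `D, ℓ:P`. -/
def appendExt (ℓ : Label) (P : Presence) (D : Ext) : Ext :=
  fun ℓ' => if ℓ' = ℓ then D ℓ' ++ [P] else D ℓ'

/-- The syntactic modality transformation relation `μ_F ⇒ ν_F`, generated by
the rules Abs, Upcast, Expand, Shrink and closed under transitivity. -/
inductive MTrans : Mod → Mod → Ctx → Prop where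
  | abs {E : Ctx} {μ : Mod} {F : Ctx} :
      cle E (act μ F) → MTrans (.abs E) μ F
  | upcast {L : Mask} {D D' : Ext} {F : Ctx} :
      extLE D D' → MTrans (.rel L D) (.rel L D') F
  | expand {L : Mask} {D : Ext} {F : Ctx} {ℓ : Label} {s : Sig} :
      subMask F L ℓ 0 = some s →
      MTrans (.rel L D) (.rel (addMask ℓ L) (appendExt ℓ (some s) D)) F
  | shrink {L : Mask} {D : Ext} {F : Ctx} {ℓ : Label} {P : Presence} :
      subMask F L ℓ 0 = P →
      MTrans (.rel (addMask ℓ L) (appendExt ℓ P D)) (.rel L D) F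
  | trans {μ ν ξ : Mod} {F : Ctx} :
      MTrans μ ν F → MTrans ν ξ F → MTrans μ ξ F

/-- Semantic modality transformation at a common index `F`. -/
def MTransSem (μ ν : Mod) (F : Ctx) : Prop :=
  ∀ G, cle F G → cle (act μ G) (act ν G)

/-- Generalized (double-categorical) transformation `μ_F ⇒ ν_{F'}` with `F ≤ F'`. -/
def GTrans (μ : Mod) (F : Ctx) (ν : Mod) (F' : Ctx) : Prop :=
  cle F F' ∧ MTransSem μ ν F'

/-- `(μ∘ν)(E) = ν(μ(E))` for all modalities and effect contexts. -/
theorem comp_act_well_defined (μ ν : Mod) (E : Ctx) :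
    act (Mod.comp μ ν) E = act ν (act μ E) := by
  cases ν with
  | abs F => cases μ <;> rfl
  | rel L₂ D₂ =>
    cases μ with
    | abs F => rfl
    | rel L₁ D₁ =>
      funext ℓ n
      simp only [Mod.comp, act, addExt, subMask, bowtieL, bowtieD,
        List.length_append, List.length_drop]
      rcases lt_or_ge n (D₂ ℓ).length with h | h
      · rw [dif_pos (by omega), dif_pos h, List.getElem_append_left h]
      · rcases lt_or_ge (n - (D₂ ℓ).length + L₂ ℓ) (D₁ ℓ).length with h2 | h2
        · rw [dif_pos (by omega), dif_neg (by omega), dif_pos h2,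
            List.getElem_append_right (by omega), List.getElem_drop]
          congr 1; omega
        · rw [dif_neg (by omega), dif_neg (by omega), dif_neg (by omega)]
          congr 1; omega


end MET
end

section
/- Modality composition is associative: (μ∘ν)∘ξ = μ∘(ν∘ξ) for all modalities μ, ν, ξ. -/
namespace MET

lemma key_ctx (L₂ : Mask) (D₂ : Ext) (L₃ : Mask) (D₃ : Ext) (E : Ctx) :
    addExt (fun ℓ => D₃ ℓ ++ bowtieD L₃ D₂ ℓ)
        (subMask E (fun ℓ => L₂ ℓ + bowtieL L₃ D₂ ℓ))
      = addExt D₃ (subMask (addExt D₂ (subMask E L₂)) L₃) := by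
  funext ℓ n
  simp only [addExt, subMask, bowtieD, bowtieL, List.length_append, List.length_drop]
  split_ifs with h1 h2 h3 h2 h3 <;>
    first
      | omega
      | (rw [List.getElem_append]; split_ifs <;> first | omega | rfl | simp [List.getElem_drop]; congr 1; omega)
      | (congr 1; omega)

/-- modality composition is associative. -/
theorem comp_assoc (μ ν ξ : Mod) :
    Mod.comp (Mod.comp μ ν) ξ = Mod.comp μ (Mod.comp ν ξ) := by
  cases ξ with
  | abs E => cases μ <;> cases ν <;> rfl
  | rel L₃ D₃ =>
    cases ν with
    | abs E => cases μ <;> rfl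
    | rel L₂ D₂ =>
      cases μ with
      | abs E =>
        show Mod.abs _ = Mod.abs _
        rw [key_ctx]
      | rel L₁ D₁ =>
        simp only [Mod.comp, Mod.rel.injEq]
        constructor
        · funext ℓ
          simp only [bowtieL, bowtieD, List.length_append, List.length_drop]
          omega
        · funext ℓ
          simp only [bowtieD, bowtieL, List.drop_append, List.append_assoc,
            List.drop_drop]

end MET
end

section
/- Modality actions are monotone: if E ≤ F under subeffecting, then for any modality μ, μ(E) ≤ μ(F). -/
namespace MET

/-- modality actions are monotone with respect to subeffecting. -/
theorem act_monotone (μ : Mod) (E F : Ctx) (h : cle E F) :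
    cle (act μ E) (act μ F) := by
  cases μ with
  | abs G =>
    intro ℓ n
    cases h' : G ℓ n <;> simp [act, ple, h']
  | rel L D =>
    intro ℓ n
    simp only [act, addExt, subMask]
    split
    · cases h' : (D ℓ)[n] <;> simp [ple, h']
    · exact h ℓ _

end MET
end

section
/- Soundness of the modality transformation rules: if μ_F ⇒ ν_F is derivable from the rules Abs, Upcast, Expand, Shrink (and transitivity), then for every effect context F' with F ≤ F', μ(F') ≤ ν(F'). -/
namespace MET

lemma ple_refl (P : Presence) : ple P P := by cases P <;> simp [ple]

lemma ple_trans {P Q R : Presence} (h₁ : ple P Q) (h₂ : ple Q R) : ple P R := by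
  cases P <;> cases Q <;> cases R <;> simp_all [ple]

lemma cle_trans {E F G : Ctx} (h₁ : cle E F) (h₂ : cle F G) : cle E G :=
  fun ℓ n => ple_trans (h₁ ℓ n) (h₂ ℓ n)

lemma act_mono (ν : Mod) {F F' : Ctx} (h : cle F F') :
    cle (act ν F) (act ν F') := by
  cases ν with
  | abs E => exact fun ℓ n => ple_refl _
  | rel L D =>
      intro ℓ n
      simp only [act, addExt, subMask]
      split
      · exact ple_refl _
      · exact h ℓ _

/-- soundness of the modality transformation rules:
if `μ_F ⇒ ν_F` is derivable then `μ(F') ≤ ν(F')` for all `F' ≥ F`. -/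
theorem mtrans_sound (μ ν : Mod) (F : Ctx) (h : MTrans μ ν F) :
    ∀ F', cle F F' → cle (act μ F') (act ν F') := by
  induction h with
  | abs hE =>
      rename_i E μ' F
      intro F' hF ℓ n
      exact ple_trans (hE ℓ n) (act_mono μ' hF ℓ n)
  | upcast hDD' =>
      rename_i L D D' F
      intro F' _ ℓ n
      have hlen : (D ℓ).length = (D' ℓ).length := (hDD' ℓ).length_eq
      simp only [act, addExt, subMask, hlen]
      split
      · exact (hDD' ℓ).get _ _
      · exact ple_refl _
  | expand hs =>
      rename_i L D F ℓ s
      intro F' hF ℓ' n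
      have hs' : F' ℓ (L ℓ) = some s := by
        have := hF ℓ (L ℓ)
        simp only [subMask, Nat.zero_add] at hs
        rw [hs] at this
        cases h' : F' ℓ (L ℓ) <;> simp_all [ple]
      simp only [act, addExt, subMask, addMask, appendExt, Nat.zero_add]
      by_cases hℓ : ℓ' = ℓ
      · subst hℓ
        simp only [if_pos rfl, if_true, List.length_append, List.length_singleton]
        rcases lt_trichotomy n (D ℓ').length with hn | hn | hn
        · rw [dif_pos hn, dif_pos (by omega)]
          rw [List.getElem_append_left hn]
          exact ple_refl _
        · subst hn
          rw [dif_neg (by omega), dif_pos (by omega)]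
          simp only [Nat.sub_self, hs']
          rw [List.getElem_append_right (le_refl _)]
          simp [hs', ple]
        · rw [dif_neg (by omega), dif_neg (by omega)]
          have : n - (D ℓ').length + L ℓ' = n - ((D ℓ').length + 1) + (L ℓ' + 1) := by omega
          rw [this]
          exact ple_refl _
      · simp only [if_neg hℓ]
        split
        · exact ple_refl _
        · exact ple_refl _
  | shrink hP =>
      rename_i L D F ℓ P
      intro F' hF ℓ' n
      simp only [subMask, Nat.zero_add] at hP
      have hs' : ple P (F' ℓ (L ℓ)) := by
        have := hF ℓ (L ℓ); rwa [hP] at this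
      simp only [act, addExt, subMask, addMask, appendExt, Nat.zero_add]
      by_cases hℓ : ℓ' = ℓ
      · subst hℓ
        simp only [if_pos rfl, if_true, List.length_append, List.length_singleton]
        rcases lt_trichotomy n (D ℓ').length with hn | hn | hn
        · rw [dif_pos (by omega), dif_pos hn]
          rw [List.getElem_append_left hn]
          exact ple_refl _
        · subst hn
          rw [dif_pos (by omega), dif_neg (by omega)]
          rw [List.getElem_append_right (le_refl _)]
          simpa using hs'
        · rw [dif_neg (by omega), dif_neg (by omega)]
          have : n - ((D ℓ').length + 1) + (L ℓ' + 1) = n - (D ℓ').length + L ℓ' := by omega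
          rw [this]
          exact ple_refl _
      · simp only [if_neg hℓ]
        split
        · exact ple_refl _
        · exact ple_refl _
  | trans h₁ h₂ ih₁ ih₂ =>
      intro F' hF
      exact cle_trans (ih₁ F' hF) (ih₂ F' hF)

end MET
end

section
/- In the label-set model (all operations present, drawn from a fixed global signature, rows identified up to permutation), if ⟨L₁|D₁⟩(F) ≤ ⟨L₂|D₂⟩(F), L₁ ⊆ F, L₂ ⊆ F, and L₁ ⋈ D₁ = L₂ ⋈ D₂, then ⟨L₁|D₁⟩_F ⇒ ⟨L₂|D₂⟩_F (i.e., ⟨L₁|D₁⟩(F') ≤ ⟨L₂|D₂⟩(F') for all F' ≥ F). -/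
/-! Label-multiset model of modal effect types: effect contexts, masks and
extensions are all finite multisets of labels from a global signature. -/

/-- Action of the relative modality `⟨L|D⟩` on `F`: `D + (F − L)`. -/
def relAct (L D F : Multiset ℕ) : Multiset ℕ := D + (F - L)

/-- in the label-set model, if `⟨L₁|D₁⟩(F) ≤ ⟨L₂|D₂⟩(F)`,
`L₁ ⊆ F`, `L₂ ⊆ F`, and `L₁ ⋈ D₁ = L₂ ⋈ D₂` (bowtie cancels common labels),
then `⟨L₁|D₁⟩_F ⇒ ⟨L₂|D₂⟩_F`, i.e. the actions are pointwise ≤ on all `F' ≥ F`. -/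
theorem trans_from_index (L₁ D₁ L₂ D₂ F : Multiset ℕ)
    (h : relAct L₁ D₁ F ≤ relAct L₂ D₂ F)
    (h₁ : L₁ ≤ F) (h₂ : L₂ ≤ F)
    (hbow : L₁ - D₁ = L₂ - D₂ ∧ D₁ - L₁ = D₂ - L₂) :
    ∀ F', F ≤ F' → relAct L₁ D₁ F' ≤ relAct L₂ D₂ F' := by
  intro F' hF'
  obtain ⟨hb1, hb2⟩ := hbow
  rw [Multiset.le_iff_count] at h h₁ h₂ hF' ⊢
  rw [Multiset.ext] at hb1 hb2
  intro a
  have := h a; have := h₁ a; have := h₂ a; have := hF' a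
  have := hb1 a; have := hb2 a
  simp only [relAct, Multiset.count_add, Multiset.count_sub] at *
  omega
end

section
/- The type translation from F¹eff to Met commutes with effect-variable instantiation: for every F¹eff type A and effect rows E, E', the translation ⦅A⦆ at E equals the translation ⦅A[E'/ε]⦆ at E,E'. -/
/-! Encoding of F¹eff types into Met modal types (label-multiset model of
effect rows, identified up to permutation). -/

/-- F¹eff types: unit, effectful functions `A →^F B`, effect abstraction `∀.A`. -/
inductive FType where
  | unit
  | arr (A : FType) (F : Multiset ℕ) (B : FType)
  | all (A : FType)

/-- Instantiation `A[E'/ε]` of the single effect variable. -/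
def FType.subst (E' : Multiset ℕ) : FType → FType
  | .unit => .unit
  | .all A => .all A
  | .arr A F B => .arr (A.subst E') (F + E') (B.subst E')

/-- Met modalities: absolute `[E]` or relative `⟨L|D⟩`. -/
inductive Mod2 where
  | abs (E : Multiset ℕ)
  | rel (L D : Multiset ℕ)

/-- Met types (relevant fragment): unit, functions, modal box types. -/
inductive MType where
  | unit
  | arr (A B : MType)
  | box (μ : Mod2) (A : MType)

/-- The type translation `⦅A⦆_E` from F¹eff to Met:
`⦅1⦆_E = ⟨⟩1`, `⦅A →^F B⦆_E = ⟨E−F|F−E⟩(⦅A⦆_F → ⦅B⦆_F)`, `⦅∀.A⦆_E = [](⦅A⦆_·)`. -/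
def transl : FType → Multiset ℕ → MType
  | .unit, _ => .box (.rel 0 0) .unit
  | .arr A F B, E => .box (.rel (E - F) (F - E)) (.arr (transl A F) (transl B F))
  | .all A, _ => .box (.abs 0) (transl A 0)

/-- the translation commutes with effect-variable instantiation:
`⦅A⦆_E = ⦅A[E'/ε]⦆_{E,E'}`. -/
theorem transl_instantiation (A : FType) (E E' : Multiset ℕ) :
    transl A E = transl (A.subst E') (E + E') := by
  induction A generalizing E with
  | unit => rfl
  | all A ih => rfl
  | arr A F B ihA ihB =>
    simp [FType.subst, transl, ihA F, ihB F]
    constructor <;> ext a <;>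
      simp [Multiset.count_sub, Multiset.count_add] <;> omega
end
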